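/- arXiv:2407.06965 — 6 statements merged into one kernel-verified Lean document; each statement's English description precedes it below -/
import Mathlib

section
/- Let $B$ be the Ferrers board with column heights $0 \le c_1 \le c_2 \le \cdots \le c_n \le n$, and for $0 \le k \le n$ let $r_k(B)$ denote the number of placements of $k$ nonattacking rooks on $B$ (i.e., $k$-subsets of cells of $B$ with pairwise distinct row and column coordinates). Then for every real number $\alpha$, $\prod_{i=1}^n (\alpha + c_i - (i-1)) = \sum_{k=0}^n r_{n-k}(B) \cdot \alpha(\alpha-1)\cdots(\alpha-k+1)$. -/
/-!
Let `B_n` be the board formed by the first `n` columns. The column of height `c n` that turns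
`B_n` into `B_{n+1}` is at least as high as all earlier ones, so a rook placed there may use any
of its `c n` rows except the `k` rows taken by the other rooks:
`r_{k+1}(B_{n+1}) = r_{k+1}(B_n) + (c n - k) r_k(B_n)`. Since `(α)_b (α - b) = (α)_{b+1}`, this
is exactly the recurrence obeyed by the coefficients of `(α + c n - n) ∑_{a+b=n} r_a(B_n) (α)_b`
in the falling-factorial basis, and the factorization follows by induction on `n`.
-/

open scoped Classical

/-- The number of placements of `k` nonattacking rooks on the Ferrers board with
column heights `c i` (column `i`, rows `0, …, c i - 1`). -/
noncomputable def rookNum (n : ℕ) (c : Fin n → ℕ) (k : ℕ) : ℕ :=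
  ((Finset.univ : Finset (Fin n × Fin n)).powersetCard k |>.filter
    (fun P => (∀ p ∈ P, (p.2 : ℕ) < c p.1) ∧
      ∀ p ∈ P, ∀ q ∈ P, p ≠ q → p.1 ≠ q.1 ∧ p.2 ≠ q.2)).card

open Finset

section RookPlacements

variable {α β : Type*}

def IsNonattacking (P : Finset (α × β)) : Prop :=
  ∀ p ∈ P, ∀ q ∈ P, p ≠ q → p.1 ≠ q.1 ∧ p.2 ≠ q.2

noncomputable def rookPlacements (B : Finset (α × β)) (k : ℕ) : Finset (Finset (α × β)) :=
  (B.powersetCard k).filter IsNonattacking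

theorem mem_rookPlacements {B P : Finset (α × β)} {k : ℕ} :
    P ∈ rookPlacements B k ↔ P ⊆ B ∧ #P = k ∧ IsNonattacking P := by
  simp [rookPlacements, and_assoc]

namespace IsNonattacking

variable {P : Finset (α × β)}

theorem injOn_fst (hP : IsNonattacking P) : Set.InjOn Prod.fst (P : Set (α × β)) :=
  fun p hp q hq h => by_contra fun hne => (hP p hp q hq hne).1 h

theorem injOn_snd (hP : IsNonattacking P) : Set.InjOn Prod.snd (P : Set (α × β)) :=
  fun p hp q hq h => by_contra fun hne => (hP p hp q hq hne).2 h

theorem card_image_fst [DecidableEq α] (hP : IsNonattacking P) : #(P.image Prod.fst) = #P :=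
  card_image_of_injOn hP.injOn_fst

theorem card_image_snd [DecidableEq β] (hP : IsNonattacking P) : #(P.image Prod.snd) = #P :=
  card_image_of_injOn hP.injOn_snd

theorem subset {Q : Finset (α × β)} (hP : IsNonattacking P) (hQ : Q ⊆ P) : IsNonattacking Q :=
  fun p hp q hq => hP p (hQ hp) q (hQ hq)

end IsNonattacking

theorem isNonattacking_insert [DecidableEq α] [DecidableEq β] {Q : Finset (α × β)} {x : α}
    (y : β) (hx : ∀ q ∈ Q, q.1 ≠ x) :
    IsNonattacking (insert (x, y) Q) ↔ IsNonattacking Q ∧ ∀ q ∈ Q, q.2 ≠ y := by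
  constructor
  · intro h
    refine ⟨h.subset (subset_insert _ _), fun q hq => ?_⟩
    exact (h q (mem_insert_of_mem hq) _ (mem_insert_self _ _) (fun e => hx q hq (by rw [e]))).2
  · rintro ⟨hQ, hy⟩ p hp q hq hpq
    rcases mem_insert.1 hp with rfl | hp <;> rcases mem_insert.1 hq with rfl | hq
    · exact absurd rfl hpq
    · exact ⟨(hx q hq).symm, (hy q hq).symm⟩
    · exact ⟨hx p hp, hy p hp⟩
    · exact hQ p hp q hq hpq

theorem isNonattacking_map {α' β' : Type*} (f : α ↪ α') (g : β ↪ β') {P : Finset (α × β)} :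
    IsNonattacking (P.map (f.prodMap g)) ↔ IsNonattacking P := by
  simp only [IsNonattacking, forall_mem_map, ne_eq, Function.Embedding.coe_prodMap,
    (f.injective.prodMap g.injective).eq_iff, Prod.map_fst, Prod.map_snd,
    f.injective.eq_iff, g.injective.eq_iff]

theorem rookPlacements_zero (B : Finset (α × β)) : rookPlacements B 0 = {∅} := by
  ext P
  simp only [mem_rookPlacements, card_eq_zero, mem_singleton]
  constructor
  · exact fun h => h.2.1
  · rintro rfl
    exact ⟨empty_subset _, rfl, by simp [IsNonattacking]⟩

theorem le_card_image_fst_of_mem_rookPlacements [DecidableEq α] {B P : Finset (α × β)} {k : ℕ}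
    (hP : P ∈ rookPlacements B k) : k ≤ #(B.image Prod.fst) := by
  obtain ⟨hPB, rfl, hPna⟩ := mem_rookPlacements.1 hP
  rw [← hPna.card_image_fst]
  exact card_le_card (image_subset_image hPB)

theorem rookPlacements_map {α' β' : Type*} (f : α ↪ α') (g : β ↪ β') (B : Finset (α × β))
    (k : ℕ) :
    rookPlacements (B.map (f.prodMap g)) k =
      (rookPlacements B k).map (mapEmbedding (f.prodMap g)).toEmbedding := by
  rw [rookPlacements, powersetCard_map, filter_map, rookPlacements]
  congr 2
  ext P
  exact isNonattacking_map f g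

end RookPlacements

section AddColumn

variable {α β : Type*} [DecidableEq α] [DecidableEq β] {B : Finset (α × β)} {x : α} {R : Finset β}

theorem filter_rookPlacements_union_column (hx : ∀ p ∈ B, p.1 ≠ x) (k : ℕ) :
    (rookPlacements (B ∪ {x} ×ˢ R) k).filter (fun P => ∀ p ∈ P, p.1 ≠ x) =
      rookPlacements B k := by
  ext P
  simp only [mem_filter, mem_rookPlacements]
  constructor
  · rintro ⟨⟨hPB, hk, hP⟩, hPx⟩
    refine ⟨fun p hp => ?_, hk, hP⟩
    rcases mem_union.1 (hPB hp) with h | h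
    · exact h
    · exact absurd (mem_singleton.1 (mem_product.1 h).1) (hPx p hp)
  · rintro ⟨hPB, hk, hP⟩
    exact ⟨⟨hPB.trans subset_union_left, hk, hP⟩, fun p hp => hx p (hPB hp)⟩

theorem filter_insert_fst_ne {Q : Finset (α × β)} (hx : ∀ q ∈ Q, q.1 ≠ x) (y : β) :
    (insert (x, y) Q).filter (fun p => p.1 ≠ x) = Q := by
  rw [filter_insert, if_neg (not_not.2 rfl)]
  exact filter_true_of_mem hx

theorem insert_mem_rookPlacements_union_column (hx : ∀ p ∈ B, p.1 ≠ x) {k : ℕ}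
    {Q : Finset (α × β)} (hQ : Q ∈ rookPlacements B k) {y : β}
    (hy : y ∈ R \ Q.image Prod.snd) :
    insert (x, y) Q ∈ rookPlacements (B ∪ {x} ×ˢ R) (k + 1) := by
  obtain ⟨hQB, rfl, hQna⟩ := mem_rookPlacements.1 hQ
  obtain ⟨hyR, hyQ⟩ := mem_sdiff.1 hy
  have hQx : ∀ q ∈ Q, q.1 ≠ x := fun q hq => hx q (hQB hq)
  refine mem_rookPlacements.2 ⟨?_, ?_, ?_⟩
  · exact insert_subset (mem_union_right _ (mk_mem_product (mem_singleton_self x) hyR))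
      (hQB.trans subset_union_left)
  · exact card_insert_of_notMem fun h => hQx _ h rfl
  · exact (isNonattacking_insert y hQx).2
      ⟨hQna, fun q hq hqy => hyQ (mem_image.2 ⟨q, hq, hqy⟩)⟩

theorem erase_mem_rookPlacements_of_mem_union_column (hx : ∀ p ∈ B, p.1 ≠ x) {k : ℕ}
    {P : Finset (α × β)} (hP : P ∈ rookPlacements (B ∪ {x} ×ˢ R) (k + 1)) {y : β}
    (hxy : (x, y) ∈ P) :
    P.erase (x, y) ∈ rookPlacements B k ∧ y ∈ R \ (P.erase (x, y)).image Prod.snd := by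
  obtain ⟨hPB, hk, hPna⟩ := mem_rookPlacements.1 hP
  have hrest : ∀ q ∈ P.erase (x, y), q.1 ≠ x ∧ q.2 ≠ y := fun q hq =>
    hPna q (mem_of_mem_erase hq) _ hxy (ne_of_mem_erase hq)
  refine ⟨mem_rookPlacements.2 ⟨fun q hq => ?_, ?_, hPna.subset (erase_subset _ _)⟩,
    mem_sdiff.2 ⟨?_, ?_⟩⟩
  · rcases mem_union.1 (hPB (mem_of_mem_erase hq)) with h | h
    · exact h
    · exact absurd (mem_singleton.1 (mem_product.1 h).1) (hrest q hq).1
  · rw [card_erase_of_mem hxy, hk, Nat.add_sub_cancel]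
  · rcases mem_union.1 (hPB hxy) with h | h
    · exact absurd rfl (hx _ h)
    · exact (mem_product.1 h).2
  · rintro h
    obtain ⟨q, hq, rfl⟩ := mem_image.1 h
    exact (hrest q hq).2 rfl

theorem card_filter_rookPlacements_union_column_not (hx : ∀ p ∈ B, p.1 ≠ x) (k : ℕ) :
    #((rookPlacements (B ∪ {x} ×ˢ R) (k + 1)).filter fun P => ¬ ∀ p ∈ P, p.1 ≠ x) =
      ∑ Q ∈ rookPlacements B k, #(R \ Q.image Prod.snd) := by
  rw [← card_sigma]
  symm
  refine card_bij (fun Qy _ => insert (x, Qy.2) Qy.1) ?_ ?_ ?_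
  · rintro ⟨Q, y⟩ hQy
    obtain ⟨hQ, hy⟩ := mem_sigma.1 hQy
    exact mem_filter.2 ⟨insert_mem_rookPlacements_union_column hx hQ hy,
      fun h => h _ (mem_insert_self _ _) rfl⟩
  · rintro ⟨Q, y⟩ hQy ⟨Q', y'⟩ hQy' h
    have hQx : ∀ q ∈ Q, q.1 ≠ x := fun q hq =>
      hx q ((mem_rookPlacements.1 (mem_sigma.1 hQy).1).1 hq)
    have hQx' : ∀ q ∈ Q', q.1 ≠ x := fun q hq =>
      hx q ((mem_rookPlacements.1 (mem_sigma.1 hQy').1).1 hq)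
    obtain rfl : Q = Q' := by
      rw [← filter_insert_fst_ne hQx y, ← filter_insert_fst_ne hQx' y']
      exact congrArg _ h
    rcases mem_insert.1 (h ▸ mem_insert_self (x, y) Q) with h' | h'
    · rw [(Prod.mk.inj h').2]
    · exact absurd rfl (hQx _ h')
  · intro P hP
    obtain ⟨hP, hPx⟩ := mem_filter.1 hP
    push Not at hPx
    obtain ⟨⟨x', y⟩, hxy, rfl : x' = x⟩ := hPx
    obtain ⟨hQ, hy⟩ := erase_mem_rookPlacements_of_mem_union_column hx hP hxy
    exact ⟨⟨P.erase (x', y), y⟩, mem_sigma.2 ⟨hQ, hy⟩, insert_erase hxy⟩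

/-- Stated without subtraction: `#R - k` would be truncated when `#R < k`, in which case
`rookPlacements B k` is empty. -/
theorem card_rookPlacements_union_column_add (hx : ∀ p ∈ B, p.1 ≠ x)
    (hR : B.image Prod.snd ⊆ R) (k : ℕ) :
    #(rookPlacements (B ∪ {x} ×ˢ R) (k + 1)) + k * #(rookPlacements B k) =
      #(rookPlacements B (k + 1)) + #R * #(rookPlacements B k) := by
  have hsplit := card_filter_add_card_filter_not
    (s := rookPlacements (B ∪ {x} ×ˢ R) (k + 1)) (fun P => ∀ p ∈ P, p.1 ≠ x)
  rw [filter_rookPlacements_union_column hx, card_filter_rookPlacements_union_column_not hx]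
    at hsplit
  have hfiber : ∀ Q ∈ rookPlacements B k, #(R \ Q.image Prod.snd) + k = #R := by
    intro Q hQ
    obtain ⟨hQB, rfl, hQna⟩ := mem_rookPlacements.1 hQ
    rw [← hQna.card_image_snd]
    exact card_sdiff_add_card_eq_card ((image_subset_image hQB).trans hR)
  calc #(rookPlacements (B ∪ {x} ×ˢ R) (k + 1)) + k * #(rookPlacements B k)
      = #(rookPlacements B (k + 1)) +
          ∑ Q ∈ rookPlacements B k, (#(R \ Q.image Prod.snd) + k) := by
        rw [← hsplit, sum_add_distrib, sum_const, smul_eq_mul, mul_comm, add_assoc]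
    _ = #(rookPlacements B (k + 1)) + #R * #(rookPlacements B k) := by
        rw [sum_congr rfl hfiber, sum_const, smul_eq_mul, mul_comm]

end AddColumn

section Ferrers

def ferrersBoard (n : ℕ) (c : ℕ → ℕ) : Finset (ℕ × ℕ) :=
  (range n).biUnion fun i => {i} ×ˢ range (c i)

variable {n : ℕ} {c : ℕ → ℕ}

theorem mem_ferrersBoard {p : ℕ × ℕ} : p ∈ ferrersBoard n c ↔ p.1 < n ∧ p.2 < c p.1 := by
  obtain ⟨i, j⟩ := p
  simp [ferrersBoard]

theorem ferrersBoard_succ : ferrersBoard (n + 1) c = ferrersBoard n c ∪ {n} ×ˢ range (c n) := by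
  rw [ferrersBoard, range_add_one, biUnion_insert, union_comm, ferrersBoard]

theorem rookPlacements_ferrersBoard_of_lt {k : ℕ} (h : n < k) :
    rookPlacements (ferrersBoard n c) k = ∅ := by
  refine eq_empty_of_forall_notMem fun P hP => h.not_ge ?_
  refine (le_card_image_fst_of_mem_rookPlacements hP).trans ((card_le_card ?_).trans_eq
    (card_range n))
  intro i hi
  obtain ⟨p, hp, rfl⟩ := mem_image.1 hi
  exact mem_range.2 (mem_ferrersBoard.1 hp).1

theorem card_rookPlacements_ferrersBoard_succ_add (hc : Monotone c) (k : ℕ) :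
    #(rookPlacements (ferrersBoard (n + 1) c) (k + 1)) + k * #(rookPlacements (ferrersBoard n c) k)
      = #(rookPlacements (ferrersBoard n c) (k + 1)) +
          c n * #(rookPlacements (ferrersBoard n c) k) := by
  have hx : ∀ p ∈ ferrersBoard n c, p.1 ≠ n := fun p hp => (mem_ferrersBoard.1 hp).1.ne
  have hR : (ferrersBoard n c).image Prod.snd ⊆ range (c n) := by
    intro j hj
    obtain ⟨p, hp, rfl⟩ := mem_image.1 hj
    obtain ⟨hpn, hpc⟩ := mem_ferrersBoard.1 hp
    exact mem_range.2 (hpc.trans_le (hc hpn.le))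
  rw [ferrersBoard_succ, card_rookPlacements_union_column_add hx hR, card_range]

end Ferrers

theorem prod_range_add_sub_eq_sum_antidiagonal {R : Type*} [CommRing R] (a : ℕ → R)
    (r : ℕ → ℕ → R) (hr_zero : ∀ n, r n 0 = 1) (hr_lt : ∀ n, r n (n + 1) = 0)
    (hr_succ : ∀ n k, r (n + 1) (k + 1) = r n (k + 1) + (a n - k) * r n k) (x : R) (n : ℕ) :
    ∏ i ∈ range n, (x + a i - i) =
      ∑ p ∈ antidiagonal n, r n p.1 * ∏ j ∈ range p.2, (x - j) := by
  induction n with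
  | zero => simp [hr_zero]
  | succ n ih =>
    set f : ℕ → R := fun m => ∏ j ∈ range m, (x - j)
    have hshift : ∑ p ∈ antidiagonal n, r n (p.1 + 1) * f p.2 =
        ∑ p ∈ antidiagonal n, r n p.1 * (f p.2 * (x - p.2)) - f (n + 1) := by
      have h1 := Nat.sum_antidiagonal_succ (n := n) (f := fun p => r n p.1 * f p.2)
      have h2 := Nat.sum_antidiagonal_succ' (n := n) (f := fun p => r n p.1 * f p.2)
      simp only [hr_zero, hr_lt, one_mul, zero_mul, zero_add, f, prod_range_succ] at h1 h2 ⊢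
      rw [← h2, h1]
      ring
    calc ∏ i ∈ range (n + 1), (x + a i - i)
        = (x + a n - n) * ∑ p ∈ antidiagonal n, r n p.1 * f p.2 := by
          rw [prod_range_succ, ih, mul_comm]
      _ = ∑ p ∈ antidiagonal n,
            (r n p.1 * (f p.2 * (x - p.2)) + (a n - p.1) * r n p.1 * f p.2) := by
          rw [mul_sum]
          refine sum_congr rfl fun p hp => ?_
          rw [← mem_antidiagonal.1 hp]
          push_cast
          ring
      _ = f (n + 1) + ∑ p ∈ antidiagonal n, r (n + 1) (p.1 + 1) * f p.2 := by
          simp only [hr_succ, add_mul, sum_add_distrib, hshift]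
          ring
      _ = ∑ p ∈ antidiagonal (n + 1), r (n + 1) p.1 * f p.2 := by
          rw [Nat.sum_antidiagonal_succ, hr_zero, one_mul]

theorem prod_range_add_sub_eq_sum_card_rookPlacements {R : Type*} [CommRing R] {c : ℕ → ℕ}
    (hc : Monotone c) (x : R) (n : ℕ) :
    ∏ i ∈ range n, (x + c i - i) =
      ∑ p ∈ antidiagonal n,
        (#(rookPlacements (ferrersBoard n c) p.1) : R) * ∏ j ∈ range p.2, (x - j) := by
  refine prod_range_add_sub_eq_sum_antidiagonal (fun i => (c i : R))
    (fun n k => #(rookPlacements (ferrersBoard n c) k)) (fun n => ?_) (fun n => ?_)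
    (fun n k => ?_) x n
  · simp [rookPlacements_zero]
  · simp [rookPlacements_ferrersBoard_of_lt (Nat.lt_succ_self n)]
  · have h := congrArg (Nat.cast : ℕ → R)
      (card_rookPlacements_ferrersBoard_succ_add (n := n) hc k)
    push_cast at h
    linear_combination h

section FinBoard

variable {n : ℕ} {c : Fin n → ℕ}

/-- The column heights `c`, continued by the constant height `n` beyond the last column. -/
def padHeights (n : ℕ) (c : Fin n → ℕ) (i : ℕ) : ℕ :=
  if h : i < n then c ⟨i, h⟩ else n

theorem padHeights_val (i : Fin n) : padHeights n c i = c i := by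
  simp [padHeights]

theorem monotone_padHeights (hmono : Monotone c) (hle : ∀ i, c i ≤ n) :
    Monotone (padHeights n c) := by
  intro i j hij
  unfold padHeights
  split_ifs with hi hj hj
  · exact hmono (Fin.mk_le_mk.2 hij)
  · exact hle _
  · omega
  · exact le_rfl

theorem rookNum_eq_card_rookPlacements (k : ℕ) :
    rookNum n c k =
      #(rookPlacements (univ.filter fun p : Fin n × Fin n => (p.2 : ℕ) < c p.1) k) := by
  rw [rookNum, rookPlacements]
  congr 1
  ext P
  simp only [mem_filter, mem_powersetCard, subset_iff, mem_univ, true_and, IsNonattacking]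
  tauto

theorem map_filter_lt_eq_ferrersBoard (hle : ∀ i, c i ≤ n) :
    (univ.filter fun p : Fin n × Fin n => (p.2 : ℕ) < c p.1).map
      (Fin.valEmbedding.prodMap Fin.valEmbedding) = ferrersBoard n (padHeights n c) := by
  ext ⟨i, j⟩
  simp only [mem_map, mem_filter, mem_univ, true_and, mem_ferrersBoard]
  constructor
  · rintro ⟨⟨i', j'⟩, hj', h⟩
    simp only [Function.Embedding.coe_prodMap, Prod.map, Fin.valEmbedding_apply,
      Prod.mk.injEq] at h
    obtain ⟨rfl, rfl⟩ := h
    exact ⟨i'.isLt, by rwa [padHeights_val]⟩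
  · rintro ⟨hi, hj⟩
    rw [padHeights, dif_pos hi] at hj
    exact ⟨(⟨i, hi⟩, ⟨j, hj.trans_le (hle _)⟩), hj, rfl⟩

theorem rookNum_eq_card_rookPlacements_ferrersBoard (hle : ∀ i, c i ≤ n) (k : ℕ) :
    rookNum n c k = #(rookPlacements (ferrersBoard n (padHeights n c)) k) := by
  rw [rookNum_eq_card_rookPlacements, ← map_filter_lt_eq_ferrersBoard hle, rookPlacements_map,
    card_map]

end FinBoard

/-- Goldman–Joichi–White factorization theorem. -/
theorem goldman_joichi_white (n : ℕ) (c : Fin n → ℕ) (hmono : Monotone c)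
    (hle : ∀ i, c i ≤ n) (α : ℝ) :
    (∏ i : Fin n, (α + (c i : ℝ) - (i : ℕ))) =
      ∑ k ∈ Finset.range (n + 1),
        (rookNum n c (n - k) : ℝ) * ∏ j ∈ Finset.range k, (α - j) := by
  have hprod : ∏ i : Fin n, (α + (c i : ℝ) - (i : ℕ)) =
      ∏ i ∈ range n, (α + (padHeights n c i : ℝ) - i) := by
    rw [← Fin.prod_univ_eq_prod_range]
    simp only [padHeights_val]
  rw [hprod, prod_range_add_sub_eq_sum_card_rookPlacements (monotone_padHeights hmono hle),
    ← Nat.sum_antidiagonal_swap]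
  simp only [Prod.fst_swap, Prod.snd_swap, rookNum_eq_card_rookPlacements_ferrersBoard hle]
  exact Nat.sum_antidiagonal_eq_sum_range_succ (fun j i =>
    (#(rookPlacements (ferrersBoard n (padHeights n c)) i) : ℝ) * ∏ l ∈ range j, (α - l)) n
end

section
/- For nonnegative integers $a$, $b$, and any real number $\alpha$, the product of falling factorials satisfies $(\alpha)^{\underline{a}} \cdot (\alpha)^{\underline{b}} = \sum_{j=0}^{\min(a,b)} \binom{a}{j}\binom{b}{j} j! \, (\alpha)^{\underline{a+b-j}}$. -/
/-!
Write `α = a + (α - a)` and expand `(α)_b` by the Chu–Vandermonde identity for falling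
factorials. Multiplying its term `C(b, j) (a)_j (α - a)_(b - j)` by `(α)_a` gives
`C(b, j) (a)_j (α)_(a + b - j)`, and `(a)_j = C(a, j) j!` vanishes for `j > a`.
-/

/-- The falling factorial `α (α - 1) ⋯ (α - k + 1)`. -/
noncomputable def fallingFac (α : ℝ) (k : ℕ) : ℝ := ∏ i ∈ Finset.range k, (α - i)

open Finset Polynomial

lemma fallingFac_eq_smeval_descPochhammer (α : ℝ) (k : ℕ) :
    fallingFac α k = (descPochhammer ℤ k).smeval α := by
  rw [← aeval_eq_smeval, aeval_def, ← eval_map, descPochhammer_map,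
    descPochhammer_eval_eq_prod_range, fallingFac]

lemma fallingFac_natCast (a k : ℕ) : fallingFac a k = a.descFactorial k := by
  rw [fallingFac, ← descPochhammer_eval_eq_prod_range, descPochhammer_eval_eq_descFactorial]

lemma fallingFac_mul_fallingFac_sub (α : ℝ) (a m : ℕ) :
    fallingFac α a * fallingFac (α - a) m = fallingFac α (a + m) := by
  simp only [fallingFac, prod_range_add, Nat.cast_add, sub_sub]

lemma fallingFac_add (x y : ℝ) (n : ℕ) :
    fallingFac (x + y) n =
      ∑ ij ∈ antidiagonal n, n.choose ij.1 * (fallingFac x ij.1 * fallingFac y ij.2) := by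
  simp only [fallingFac_eq_smeval_descPochhammer]
  exact Ring.descPochhammer_smeval_add n (Commute.all x y)

lemma fallingFac_mul_fallingFac_eq_sum_range (α : ℝ) (a b : ℕ) :
    fallingFac α a * fallingFac α b =
      ∑ j ∈ range (b + 1), b.choose j * a.descFactorial j * fallingFac α (a + b - j) := by
  calc fallingFac α a * fallingFac α b
      = fallingFac α a * fallingFac (a + (α - a)) b := by rw [add_sub_cancel]
    _ = ∑ ij ∈ antidiagonal b,
          b.choose ij.1 * fallingFac a ij.1 * (fallingFac α a * fallingFac (α - a) ij.2) := by
        rw [fallingFac_add, mul_sum]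
        exact sum_congr rfl fun _ _ ↦ by ring
    _ = ∑ j ∈ range (b + 1), b.choose j * a.descFactorial j * fallingFac α (a + b - j) := by
        rw [Nat.sum_antidiagonal_eq_sum_range_succ_mk]
        refine sum_congr rfl fun j hj ↦ ?_
        rw [fallingFac_natCast, fallingFac_mul_fallingFac_sub,
          Nat.add_sub_assoc (Nat.lt_succ_iff.mp (mem_range.mp hj))]

/-- Product of two falling factorials expanded in the falling factorial basis. -/
theorem fallingFac_mul_fallingFac (a b : ℕ) (α : ℝ) :
    fallingFac α a * fallingFac α b =
      ∑ j ∈ Finset.range (min a b + 1),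
        (a.choose j : ℝ) * (b.choose j : ℝ) * (j.factorial : ℝ) *
          fallingFac α (a + b - j) := by
  have hcoeff (j : ℕ) :
      (b.choose j * a.descFactorial j : ℝ) = a.choose j * b.choose j * j.factorial := by
    rw [Nat.descFactorial_eq_factorial_mul_choose]; push_cast; ring
  rw [fallingFac_mul_fallingFac_eq_sum_range]
  simp only [hcoeff]
  refine (sum_subset (range_subset_range.2 (by omega)) fun j hjb hja ↦ ?_).symm
  rw [Nat.choose_eq_zero_of_lt (by simp only [mem_range] at hjb hja; omega)]
  simp only [Nat.cast_zero, zero_mul]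
end

section
/- Let $n \ge 1$ and let $\alpha \ge n$ be positive integers. Then $\sum q^{c_1 + c_2 + \cdots + c_n + \mathrm{inv}(c)} = q^{\binom{n}{2}} \prod_{i=0}^{n-1} [\alpha - i]_q$, where the sum is over all tuples $(c_1,\dots,c_n)$ of pairwise distinct integers in $\{0,1,\dots,\alpha-1\}$, and $\mathrm{inv}(c) = |\{(i,j) : i < j, \ c_i > c_j\}|$. -/
/-!
Induct on `n`, appending a last colour `j` to an injective colouring `c` of length `n` with image
`V`. The new colour adds `j` to the colour sum and one inversion for every colour of `V` above `j`.
Since `j ∉ V`, `j + #{v ∈ V | j < v} = n + #{u ∉ V | u < j}`: the exponent gained is `n` plus the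
rank of `j` among the `α - n` free colours, so summing over `j` contributes `q ^ n * [α - n]_q`.
-/

open Finset

theorem Finset.sum_card_filter_lt {ι M : Type*} [LinearOrder ι] [AddCommMonoid M]
    (s : Finset ι) (f : ℕ → M) :
    ∑ j ∈ s, f #{i ∈ s | i < j} = ∑ k ∈ range #s, f k := by
  induction s using Finset.induction_on_max with
  | empty => simp
  | insert a s hlt ih =>
    have ha : a ∉ s := fun h => lt_irrefl a (hlt a h)
    have hbelow : ∀ j ∈ s, #{i ∈ insert a s | i < j} = #{i ∈ s | i < j} := fun j hj => by
      rw [filter_insert, if_neg (hlt j hj).not_gt]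
    rw [sum_insert ha, sum_congr rfl fun j hj => congrArg f (hbelow j hj), ih, filter_insert,
      if_neg (lt_irrefl a), filter_true_of_mem hlt, card_insert_of_notMem ha, sum_range_succ,
      add_comm]

theorem Finset.card_filter_lt_add_card_filter_gt {α : Type*} [Fintype α] [LinearOrder α]
    {V : Finset α} {j : α} (hj : j ∉ V) :
    #{u | u < j} + #{v ∈ V | j < v} = #V + #{u ∈ Vᶜ | u < j} := by
  have hV : #{v ∈ V | v < j} + #{v ∈ V | j < v} = #V := by
    rw [← card_filter_add_card_filter_not (s := V) (· < j)]
    congr 2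
    refine filter_congr fun v hv => ?_
    exact ⟨fun h => h.not_gt, fun h => lt_of_le_of_ne (not_lt.mp h) fun e => hj (e ▸ hv)⟩
  have hbelow : #{v ∈ V | v < j} + #{u ∈ Vᶜ | u < j} = #{u | u < j} := by
    rw [← card_filter_add_card_filter_not (s := {u | u < j}) (· ∈ V), filter_filter,
      filter_filter]
    congr 2 <;> ext u <;> simp [and_comm]
  omega

section Inversions

variable {α : Type*} [LinearOrder α] {n : ℕ}

def inversions (c : Fin n → α) : ℕ := #{p : Fin n × Fin n | p.1 < p.2 ∧ c p.2 < c p.1}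

theorem inversions_snoc (c : Fin n → α) (j : α) :
    inversions (Fin.snoc c j : Fin (n + 1) → α) = inversions c + #{i | j < c i} := by
  simp only [inversions, card_filter, Fintype.sum_prod_type, Fin.sum_univ_castSucc,
    Fin.snoc_castSucc, Fin.snoc_last, Fin.castSucc_lt_castSucc_iff, Fin.castSucc_lt_last,
    (Fin.le_last _).not_gt, lt_irrefl, true_and, false_and, if_false, sum_const_zero, add_zero,
    sum_add_distrib]

end Inversions

theorem Fin.sum_filter_injective_snoc {α M : Type*} [Fintype α] [DecidableEq α]
    [AddCommMonoid M] {n : ℕ} (f : (Fin (n + 1) → α) → M) :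
    ∑ c ∈ {c : Fin (n + 1) → α | c.Injective}, f c =
      ∑ c ∈ {c : Fin n → α | c.Injective}, ∑ j ∈ (univ.image c)ᶜ, f (Fin.snoc c j) := by
  rw [sum_filter, ← (Fin.snocEquiv fun _ => α).sum_comp, Fintype.sum_prod_type, sum_comm,
    sum_filter]
  refine sum_congr rfl fun c _ => ?_
  have hsnoc : ∀ j, (Fin.snocEquiv fun _ => α) (j, c) = Fin.snoc c j := fun _ => rfl
  by_cases hc : c.Injective
  · simp only [hsnoc, Fin.snoc_injective_iff, hc, true_and, if_true, ← sum_filter]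
    congr 1
    ext j
    simp
  · simp [hsnoc, Fin.snoc_injective_iff, hc]

theorem Fin.sum_compl_image_pow {R : Type*} [Semiring R] (x : R) {m α : ℕ} {c : Fin m → Fin α}
    (hc : c.Injective) :
    ∑ j ∈ (univ.image c)ᶜ, x ^ ((j : ℕ) + #{i | j < c i}) =
      x ^ m * ∑ k ∈ range (α - m), x ^ k := by
  set U := (univ.image c)ᶜ with hU
  have hexp : ∀ j ∈ U, (j : ℕ) + #{i | j < c i} = m + #{u ∈ U | u < j} := fun j hj => by
    have habove : #{i | j < c i} = #{v ∈ univ.image c | j < v} := by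
      rw [filter_image, card_image_of_injective _ hc]
    have hcard : #(univ.image c) = m := by simp [card_image_of_injective _ hc]
    have := card_filter_lt_add_card_filter_gt (mem_compl.mp hj)
    rw [filter_gt_eq_Iio, Fin.card_Iio, ← hU] at this
    omega
  calc ∑ j ∈ U, x ^ ((j : ℕ) + #{i | j < c i})
      = ∑ j ∈ U, x ^ (m + #{u ∈ U | u < j}) := sum_congr rfl fun j hj => by rw [hexp j hj]
    _ = ∑ k ∈ range #U, x ^ (m + k) := sum_card_filter_lt U fun k => x ^ (m + k)
    _ = x ^ m * ∑ k ∈ range (α - m), x ^ k := by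
      simp [U, card_compl, card_image_of_injective _ hc, pow_add, mul_sum]

theorem sum_injective_pow_sum_add_inversions {R : Type*} [CommSemiring R] (x : R) (n α : ℕ) :
    ∑ c ∈ {c : Fin n → Fin α | c.Injective}, x ^ (∑ i, (c i : ℕ) + inversions c) =
      x ^ n.choose 2 * ∏ i ∈ range n, ∑ j ∈ range (α - i), x ^ j := by
  induction n with
  | zero => simp [inversions, Function.injective_of_subsingleton]
  | succ n ih =>
    have hstep : ∀ c : Fin n → Fin α, c.Injective →
        ∑ j ∈ (univ.image c)ᶜ, x ^ (∑ i, ((Fin.snoc c j : Fin (n + 1) → Fin α) i : ℕ) +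
          inversions (Fin.snoc c j : Fin (n + 1) → Fin α)) =
        x ^ (∑ i, (c i : ℕ) + inversions c) * (x ^ n * ∑ k ∈ range (α - n), x ^ k) := by
      intro c hc
      simp only [Fin.sum_univ_castSucc, Fin.snoc_castSucc, Fin.snoc_last, inversions_snoc,
        ← Fin.sum_compl_image_pow x hc, mul_sum, ← pow_add]
      refine sum_congr rfl fun j _ => ?_
      ring_nf
    rw [Fin.sum_filter_injective_snoc, sum_congr rfl fun c hc => hstep c (mem_filter.mp hc).2,
      ← sum_mul, ih, prod_range_succ, Nat.choose_succ_succ', Nat.choose_one_right, pow_add]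
    ring

theorem complete_graph_principal_specialization_general (n α : ℕ) :
    ∑ c ∈ (Finset.univ : Finset (Fin n → Fin α)).filter (fun c => Function.Injective c),
      (Polynomial.X : Polynomial ℚ) ^
        ((∑ i : Fin n, (c i : ℕ)) +
          (Finset.univ.filter (fun p : Fin n × Fin n => p.1 < p.2 ∧ c p.2 < c p.1)).card)
    = Polynomial.X ^ n.choose 2 *
        ∏ i ∈ Finset.range n,
          (∑ j ∈ Finset.range (α - i), (Polynomial.X : Polynomial ℚ) ^ j) :=
  sum_injective_pow_sum_add_inversions Polynomial.X n α

/-- Principal specialization formula for the chromatic quasisymmetric function of the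
complete graph: injective colorings weighted by inversions and total color weight. -/
theorem complete_graph_principal_specialization (n α : ℕ) (hn : 1 ≤ n) (hα : n ≤ α) :
    ∑ c ∈ (Finset.univ : Finset (Fin n → Fin α)).filter (fun c => Function.Injective c),
      (Polynomial.X : Polynomial ℚ) ^
        ((∑ i : Fin n, (c i : ℕ)) +
          (Finset.univ.filter (fun p : Fin n × Fin n => p.1 < p.2 ∧ c p.2 < c p.1)).card)
    = Polynomial.X ^ n.choose 2 *
        ∏ i ∈ Finset.range n,
          (∑ j ∈ Finset.range (α - i), (Polynomial.X : Polynomial ℚ) ^ j) :=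
  complete_graph_principal_specialization_general n α
end

section
/- Let $h : [n] \to [n]$ be a Hessenberg function and let $a_i = |\{j < i : h(j) \ge i\}|$ and $b_i = h(i) - i$ for $1 \le i \le n$. Then for every integer $\alpha$, $\prod_{i=1}^n (q^{\alpha} - q^{a_i}) = \prod_{i=1}^n (q^{\alpha} - q^{b_i})$; equivalently, the multisets $\{a_1,\dots,a_n\}$ and $\{b_1,\dots,b_n\}$ coincide. -/
open scoped Classical

/-- Cardinality of a val-interval in `Fin n`. -/
lemma card_val_interval (n c d : ℕ) (hd : d ≤ n) :
    (Finset.univ.filter (fun j : Fin n => c ≤ (j : ℕ) ∧ (j : ℕ) < d)).card = d - c := by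
  rw [← Nat.card_Ico c d]
  apply Finset.card_bij (fun (j : Fin n) _ => (j : ℕ))
  · intro j hj
    simp only [Finset.mem_filter] at hj
    simp [Finset.mem_Ico, hj.2.1, hj.2.2]
  · intro j1 _ j2 _ hv
    exact Fin.ext hv
  · intro k hk
    simp only [Finset.mem_Ico] at hk
    refine ⟨⟨k, lt_of_lt_of_le hk.2 hd⟩, ?_, rfl⟩
    simp [hk.1, hk.2]

lemma key_iff (n : ℕ) (h : Fin n → ℕ) (hmono : Monotone h) (i : Fin n) (m : ℕ) (hm : 1 ≤ m) :
    m ≤ (Finset.univ.filter (fun j : Fin n => j < i ∧ (i : ℕ) < h j)).card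
      ↔ m ≤ (i : ℕ) ∧ (i : ℕ) < h ⟨(i : ℕ) - m, lt_of_le_of_lt (Nat.sub_le _ _) i.isLt⟩ := by
  constructor
  · intro hcard
    have hmi : m ≤ (i : ℕ) := by
      have hsub : (Finset.univ.filter (fun j : Fin n => j < i ∧ (i : ℕ) < h j))
          ⊆ (Finset.univ.filter (fun j : Fin n => 0 ≤ (j : ℕ) ∧ (j : ℕ) < (i : ℕ))) := by
        intro j hj
        simp only [Finset.mem_filter] at hj ⊢
        exact ⟨hj.1, Nat.zero_le _, hj.2.1⟩
      have := Finset.card_le_card hsub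
      rw [card_val_interval n 0 (i : ℕ) (le_of_lt i.isLt)] at this
      omega
    refine ⟨hmi, ?_⟩
    by_contra hcon
    push_neg at hcon
    -- then S ⊆ {j : i - m < j < i}
    have hsub : (Finset.univ.filter (fun j : Fin n => j < i ∧ (i : ℕ) < h j))
        ⊆ (Finset.univ.filter (fun j : Fin n => (i : ℕ) - m + 1 ≤ (j : ℕ) ∧ (j : ℕ) < (i : ℕ))) := by
      intro j hj
      simp only [Finset.mem_filter] at hj ⊢
      refine ⟨hj.1, ?_, hj.2.1⟩
      by_contra hjle
      push_neg at hjle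
      have : h j ≤ h ⟨(i : ℕ) - m, lt_of_le_of_lt (Nat.sub_le _ _) i.isLt⟩ :=
        hmono (by simpa [Fin.le_def] using by omega)
      have := hj.2.2
      omega
    have := Finset.card_le_card hsub
    rw [card_val_interval n ((i : ℕ) - m + 1) (i : ℕ) (le_of_lt i.isLt)] at this
    omega
  · rintro ⟨hmi, hlt⟩
    have hsub : (Finset.univ.filter (fun j : Fin n => (i : ℕ) - m ≤ (j : ℕ) ∧ (j : ℕ) < (i : ℕ)))
        ⊆ (Finset.univ.filter (fun j : Fin n => j < i ∧ (i : ℕ) < h j)) := by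
      intro j hj
      simp only [Finset.mem_filter] at hj ⊢
      refine ⟨hj.1, hj.2.2, ?_⟩
      have : h ⟨(i : ℕ) - m, lt_of_le_of_lt (Nat.sub_le _ _) i.isLt⟩ ≤ h j :=
        hmono (by simpa [Fin.le_def] using hj.2.1)
      omega
    have := Finset.card_le_card hsub
    rw [card_val_interval n ((i : ℕ) - m) (i : ℕ) (le_of_lt i.isLt)] at this
    omega

/-- For a Hessenberg function, the row counts `a i = #{j < i : h j ≥ i + 1}` and the
column counts `b i = h i - (i + 1)` (indices `0`-based) give the same products
`∏ (q^α - q^{a_i}) = ∏ (q^α - q^{b_i})` for every integer `α`; equivalently the two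
multisets coincide. -/
theorem row_col_multisets_coincide (n : ℕ) (hn : 1 ≤ n) (h : Fin n → ℕ)
    (hmono : Monotone h) (hh : ∀ i : Fin n, (i : ℕ) < h i ∧ h i ≤ n)
    (a b : Fin n → ℕ)
    (ha : ∀ i, a i = (Finset.univ.filter (fun j : Fin n => j < i ∧ (i : ℕ) < h j)).card)
    (hb : ∀ i, b i = h i - ((i : ℕ) + 1)) :
    (∀ α : ℤ,
        (∏ i : Fin n, ((RatFunc.X : RatFunc ℚ) ^ α - RatFunc.X ^ ((a i : ℕ) : ℤ)))
          = ∏ i : Fin n, ((RatFunc.X : RatFunc ℚ) ^ α - RatFunc.X ^ ((b i : ℕ) : ℤ))) ∧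
      Multiset.map a Finset.univ.val = Multiset.map b Finset.univ.val := by
  -- the "≥ m" counts agree
  have hge : ∀ m : ℕ, (Finset.univ.filter (fun i : Fin n => m ≤ a i)).card
      = (Finset.univ.filter (fun i : Fin n => m ≤ b i)).card := by
    intro m
    rcases Nat.eq_zero_or_pos m with rfl | hm
    · simp
    apply Finset.card_bij (fun (i : Fin n) hi =>
      (⟨(i : ℕ) - m, lt_of_le_of_lt (Nat.sub_le _ _) i.isLt⟩ : Fin n))
    · intro i hi
      simp only [Finset.mem_filter] at hi ⊢
      rw [ha i, key_iff n h hmono i m hm] at hi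
      refine ⟨Finset.mem_univ _, ?_⟩
      rw [hb]
      simp only
      obtain ⟨hmi, hlt⟩ := hi.2
      omega
    · intro i1 h1 i2 h2 he
      simp only [Finset.mem_filter] at h1 h2
      rw [ha _, key_iff n h hmono _ m hm] at h1 h2
      have := Fin.mk.injEq .. ▸ he
      apply Fin.ext
      have hv : (i1 : ℕ) - m = (i2 : ℕ) - m := congrArg Fin.val he
      omega
    · intro j hj
      simp only [Finset.mem_filter] at hj
      rw [hb] at hj
      have hjn : (j : ℕ) + m < n := by
        have := (hh j).2
        omega
      refine ⟨⟨(j : ℕ) + m, hjn⟩, ?_, ?_⟩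
      · simp only [Finset.mem_filter]
        refine ⟨Finset.mem_univ _, ?_⟩
        rw [ha, key_iff n h hmono _ m hm]
        constructor
        · simp
        · simp only [Fin.val_mk, Nat.add_sub_cancel, Fin.eta]
          omega
      · apply Fin.ext
        simp
  -- counts of each value agree, hence multisets equal
  have key : Multiset.map a Finset.univ.val = Multiset.map b Finset.univ.val := by
    ext k
    rw [Multiset.count_map, Multiset.count_map]
    have hcard : ∀ f : Fin n → ℕ, Multiset.card (Multiset.filter (fun i => k = f i) Finset.univ.val)
        = (Finset.univ.filter (fun i : Fin n => k ≤ f i)).card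
          - (Finset.univ.filter (fun i : Fin n => k + 1 ≤ f i)).card := by
      intro f
      have h1 : Multiset.card (Multiset.filter (fun i => k = f i) Finset.univ.val)
          = (Finset.univ.filter (fun i : Fin n => k = f i)).card := rfl
      rw [h1]
      have h2 : (Finset.univ.filter (fun i : Fin n => k = f i))
          = (Finset.univ.filter (fun i : Fin n => k ≤ f i))
            \ (Finset.univ.filter (fun i : Fin n => k + 1 ≤ f i)) := by
        ext i
        simp only [Finset.mem_filter, Finset.mem_sdiff, Finset.mem_univ, true_and]
        omega
      rw [h2, Finset.card_sdiff_of_subset]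
      intro i hi
      simp only [Finset.mem_filter] at hi ⊢
      exact ⟨hi.1, by omega⟩
    rw [hcard a, hcard b, hge k, hge (k + 1)]
  refine ⟨?_, key⟩
  intro α
  have hpf : ∀ f : Fin n → ℕ,
      (∏ i : Fin n, ((RatFunc.X : RatFunc ℚ) ^ α - RatFunc.X ^ ((f i : ℕ) : ℤ)))
        = ((Multiset.map f Finset.univ.val).map
            (fun k : ℕ => (RatFunc.X : RatFunc ℚ) ^ α - RatFunc.X ^ (k : ℤ))).prod := by
    intro f
    rw [Multiset.map_map]
    rfl
  rw [hpf a, hpf b, key]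
end

section
/- Let $h:[n]\to[n]$ be a Hessenberg function whose attacking graph $G$ (edges $\{i,j\}$ with $i < j \le h(i)$) is the incomparability graph of a natural unit interval order, and let $w \in \mathbb{Z}_{>0}^n$. Define a new graph $G'$ on $[n]$ by keeping only the edges $\{i,j\}$ of $G$ with $w_i = w_j$. Then $G'$ is again the incomparability graph of a natural unit interval order; equivalently, the complement poset of $G'$ (with the natural labeling) is $(2+2)$-free and $(3+1)$-free. -/
/-!
Relabel the vertices by sorting them lexicographically by `(w i, i)`. Each colour class becomes a
block of consecutive labels on which the new order agrees with the old one, so if `a < b < c` and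
`{a, c}` is a monochromatic edge, then `b` has the same colour and lies between `a` and `c` in the
original order; hence `{a, b}` and `{b, c}` are edges too, the latter because `h` is monotone.
A relation on `Fin n` with this interval property is the attacking graph of the Hessenberg
function sending `a` to one more than its largest right neighbour.
-/

open Finset Function

def IsIntervalClosed {α : Type*} [Preorder α] (E : α → α → Prop) : Prop :=
  ∀ ⦃a b c⦄, a < b → b < c → E a c → E a b ∧ E b c

theorem IsIntervalClosed.comap {α β : Type*} [Preorder α] [Preorder β] {E : α → α → Prop}
    (hE : IsIntervalClosed E) {g : β → α} (hg : StrictMono g) :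
    IsIntervalClosed (fun a b => E (g a) (g b)) :=
  fun _ _ _ hab hbc => hE (hg hab) (hg hbc)

section hessenbergOf

variable {n : ℕ} (E : Fin n → Fin n → Prop) [DecidableRel E]

def hessenbergOf (a : Fin n) : ℕ :=
  ((a : ℕ) + 1) ⊔ ({b | a < b ∧ E a b} : Finset (Fin n)).sup (fun b : Fin n => (b : ℕ) + 1)

variable {E}

theorem lt_hessenbergOf (a : Fin n) : (a : ℕ) < hessenbergOf E a :=
  Nat.lt_of_succ_le le_sup_left

theorem hessenbergOf_le (a : Fin n) : hessenbergOf E a ≤ n :=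
  sup_le a.2 (Finset.sup_le fun b _ => b.2)

theorem lt_hessenbergOf_iff (hE : IsIntervalClosed E) {a b : Fin n} (hab : a < b) :
    (b : ℕ) < hessenbergOf E a ↔ E a b := by
  constructor
  · intro hb
    by_contra hnot
    have : hessenbergOf E a ≤ b := by
      refine sup_le (Fin.lt_def.mp hab) (Finset.sup_le fun c hc => ?_)
      obtain ⟨-, hec⟩ := (mem_filter.mp hc).2
      rcases lt_trichotomy c b with hcb | rfl | hbc
      · exact hcb
      · exact absurd hec hnot
      · exact absurd (hE hab hbc hec).1 hnot
    omega
  · intro he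
    have hb : b ∈ ({c | a < c ∧ E a c} : Finset (Fin n)) :=
      mem_filter.mpr ⟨mem_univ b, hab, he⟩
    exact Nat.lt_of_succ_le ((le_sup (f := fun c : Fin n => (c : ℕ) + 1) hb).trans le_sup_right)

theorem monotone_hessenbergOf (hE : IsIntervalClosed E) : Monotone (hessenbergOf E) := by
  intro a a' haa'
  have ha' := lt_hessenbergOf (E := E) a'
  refine sup_le (by rw [Fin.le_def] at haa'; omega) (Finset.sup_le fun c hc => ?_)
  obtain ⟨-, hec⟩ := (mem_filter.mp hc).2
  rcases le_or_gt c a' with hca' | ha'c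
  · rw [Fin.le_def] at hca'; omega
  · refine (lt_hessenbergOf_iff hE ha'c).mpr ?_
    rcases haa'.lt_or_eq with hlt | rfl
    · exact (hE hlt ha'c hec).2
    · exact hec

theorem lt_hessenbergOf_or_iff (hE : IsIntervalClosed E) (hlt : ∀ a b, E a b → a < b)
    (a b : Fin n) :
    ((a < b ∧ (b : ℕ) < hessenbergOf E a) ∨ (b < a ∧ (a : ℕ) < hessenbergOf E b)) ↔
      E a b ∨ E b a := by
  rw [and_congr_right (lt_hessenbergOf_iff hE), and_congr_right (lt_hessenbergOf_iff hE)]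
  exact or_congr (and_iff_right_of_imp (hlt a b)) (and_iff_right_of_imp (hlt b a))

end hessenbergOf

theorem Tuple.strictMono_comp_sort {n : ℕ} {α : Type*} [LinearOrder α] {f : Fin n → α}
    (hf : Injective f) : StrictMono (f ∘ Tuple.sort f) :=
  (Tuple.monotone_sort f).strictMono_of_injective (hf.comp (Tuple.sort f).injective)

/-- The monochromatic attacking graph; vertex `i` of colour `w i` sits at `toLex (w i, i)`. -/
def monochromaticAttack {n : ℕ} (h : Fin n → ℕ) (p q : ℕ ×ₗ Fin n) : Prop :=
  (ofLex p).1 = (ofLex q).1 ∧ (ofLex p).2 < (ofLex q).2 ∧ ((ofLex q).2 : ℕ) < h (ofLex p).2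

theorem monochromaticAttack.lt {n : ℕ} {h : Fin n → ℕ} {p q : ℕ ×ₗ Fin n}
    (hpq : monochromaticAttack h p q) : p < q :=
  Prod.Lex.lt_iff.mpr (Or.inr ⟨hpq.1, hpq.2.1⟩)

theorem isIntervalClosed_monochromaticAttack {n : ℕ} {h : Fin n → ℕ} (hmono : Monotone h) :
    IsIntervalClosed (monochromaticAttack h) := by
  intro p q r hpq hqr ⟨hpr, _, hrh⟩
  rcases Prod.Lex.lt_iff.mp hpq with hpq | ⟨hpq₁, hpq₂⟩ <;>
    rcases Prod.Lex.lt_iff.mp hqr with hqr | ⟨hqr₁, hqr₂⟩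
  · exact absurd hpr (hpq.trans hqr).ne
  · exact absurd hpr (hqr₁ ▸ hpq).ne
  · exact absurd hpr (hpq₁ ▸ hqr).ne
  · have hqh : (r.2 : ℕ) < h q.2 := hrh.trans_le (hmono hpq₂.le)
    exact ⟨⟨hpq₁, hpq₂, (Fin.lt_def.mp hqr₂).trans hrh⟩, ⟨hqr₁, hqr₂, hqh⟩⟩

theorem monochromaticAttack_toLex_iff {n : ℕ} (h w : Fin n → ℕ) (i j : Fin n) :
    monochromaticAttack h (toLex (w i, i)) (toLex (w j, j)) ↔
      i < j ∧ (j : ℕ) < h i ∧ w i = w j := by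
  simp only [monochromaticAttack, ofLex_toLex]
  tauto

theorem monochromatic_restriction_unit_interval_general (n : ℕ) (h : Fin n → ℕ)
    (hmono : Monotone h)
    (w : Fin n → ℕ) :
    ∃ (ρ : Equiv.Perm (Fin n)) (h' : Fin n → ℕ),
      Monotone h' ∧ (∀ i : Fin n, (i : ℕ) < h' i ∧ h' i ≤ n) ∧
      ∀ i j : Fin n, i < j →
        (((j : ℕ) < h i ∧ w i = w j) ↔
          ((ρ i < ρ j ∧ (ρ j : ℕ) < h' (ρ i)) ∨ (ρ j < ρ i ∧ (ρ i : ℕ) < h' (ρ j)))) := by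
  classical
  let key : Fin n → ℕ ×ₗ Fin n := fun i => toLex (w i, i)
  have hkey : Injective key := fun i j hij => congrArg Prod.snd (toLex.injective hij)
  let σ := Tuple.sort key
  let E : Fin n → Fin n → Prop := fun a b => monochromaticAttack h (key (σ a)) (key (σ b))
  have hE : IsIntervalClosed E :=
    (isIntervalClosed_monochromaticAttack hmono).comap (Tuple.strictMono_comp_sort hkey)
  have hElt : ∀ a b, E a b → a < b := fun a b hab =>
    (Tuple.strictMono_comp_sort hkey).lt_iff_lt.mp hab.lt
  refine ⟨σ.symm, hessenbergOf E, monotone_hessenbergOf hE,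
    fun a => ⟨lt_hessenbergOf a, hessenbergOf_le a⟩, fun i j hij => ?_⟩
  rw [lt_hessenbergOf_or_iff hE hElt]
  simp only [E, key, Equiv.apply_symm_apply, monochromaticAttack_toLex_iff]
  constructor
  · exact fun hij' => Or.inl ⟨hij, hij'⟩
  · rintro (⟨-, hij'⟩ | ⟨hji, -⟩)
    · exact hij'
    · exact absurd hij hji.asymm

/-- Restricting the attacking graph of a Hessenberg function to the monochromatic
edges of an arbitrary coloring `w` again yields (up to relabeling of the vertices)
the incomparability graph of a natural unit interval order, i.e. the graph of a
Hessenberg function. -/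
theorem monochromatic_restriction_unit_interval (n : ℕ) (h : Fin n → ℕ)
    (hmono : Monotone h) (hh : ∀ i : Fin n, (i : ℕ) < h i ∧ h i ≤ n)
    (w : Fin n → ℕ) :
    ∃ (ρ : Equiv.Perm (Fin n)) (h' : Fin n → ℕ),
      Monotone h' ∧ (∀ i : Fin n, (i : ℕ) < h' i ∧ h' i ≤ n) ∧
      ∀ i j : Fin n, i < j →
        (((j : ℕ) < h i ∧ w i = w j) ↔
          ((ρ i < ρ j ∧ (ρ j : ℕ) < h' (ρ i)) ∨ (ρ j < ρ i ∧ (ρ i : ℕ) < h' (ρ j)))) :=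
  monochromatic_restriction_unit_interval_general n h hmono w
end

section
/- Let $B = B(c_1,\dots,c_n)$ be a Ferrers board with $0 \le c_1 \le \cdots \le c_n \le n$, and let $J \ge 0$ be such that every placement of $n$ nonattacking rooks on $[n]\times[n]$ has at least $J$ rooks on $B$. Assume $c_i - J \ge 0$ for all $i$, and let $R = B(c_1 - J, \dots, c_n - J)$ be the Ferrers board obtained by shifting all columns of $B$ down by $J$. Then the hit numbers satisfy $h_k(B) = h_{k-J}(R)$ for all $J \le k \le n$, and $h_k(B) = 0$ for $k < J$. -/
open scoped Classical

/-- Composing with a permutation does not change the cardinality of a filtered set. -/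
lemma card_filter_perm_comp {n : ℕ} (σ : Equiv.Perm (Fin n)) (p : Fin n → Prop)
    [DecidablePred p] :
    (Finset.univ.filter (fun i : Fin n => p (σ i))).card
      = (Finset.univ.filter (fun i : Fin n => p i)).card := by
  refine Finset.card_equiv σ (fun i => ?_)
  simp

/-- The number of values of `Fin n` that are `≥ m` is `n - m`. -/
lemma card_filter_ge {n : ℕ} (m : ℕ) :
    (Finset.univ.filter (fun v : Fin n => m ≤ (v : ℕ))).card = n - m := by
  rcases Nat.eq_zero_or_pos n with rfl | hn
  · simp
  · rw [← Nat.card_Ico m n]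
    refine Finset.card_nbij' (fun v => (v : ℕ)) (fun v => ⟨v % n, Nat.mod_lt _ hn⟩)
      ?_ ?_ ?_ ?_
    · intro a ha
      simp only [Finset.mem_coe, Finset.mem_filter, Finset.mem_univ, true_and] at ha
      simp only [Finset.mem_coe, Finset.mem_Ico]
      exact ⟨ha, a.isLt⟩
    · intro a ha
      simp only [Finset.mem_coe, Finset.mem_Ico] at ha
      simp only [Finset.mem_coe, Finset.mem_filter, Finset.mem_univ, true_and]
      rw [Nat.mod_eq_of_lt ha.2]
      exact ha.1
    · intro a _
      ext
      simp [Nat.mod_eq_of_lt a.isLt]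
    · intro a ha
      simp only [Finset.mem_coe, Finset.mem_Ico] at ha
      simp [Nat.mod_eq_of_lt ha.2]

/-- Pointwise key lemma: rotating the rows of a permutation by `J` increases the
number of hits on the shifted board by exactly `J`. -/
lemma hit_shift {n : ℕ} (J : ℕ) (hJn : J ≤ n) (c : Fin n → ℕ)
    (hle : ∀ i, c i ≤ n) (hcJ : ∀ i, J ≤ c i) (σ : Equiv.Perm (Fin n)) :
    (Finset.univ.filter (fun i : Fin n => ((σ i : ℕ) + J) % n < c i)).card
      = (Finset.univ.filter (fun i : Fin n => (σ i : ℕ) < c i - J)).card + J := by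
  set A := Finset.univ.filter (fun i : Fin n => (σ i : ℕ) < c i - J) with hA
  set B := Finset.univ.filter (fun i : Fin n => n - J ≤ (σ i : ℕ)) with hB
  have hdisj : Disjoint A B := by
    rw [Finset.disjoint_left]
    intro i hiA hiB
    rw [hA, Finset.mem_filter] at hiA
    rw [hB, Finset.mem_filter] at hiB
    have := hle i
    omega
  have hsplit : (Finset.univ.filter (fun i : Fin n => ((σ i : ℕ) + J) % n < c i))
      = A ∪ B := by
    ext i
    simp only [hA, hB, Finset.mem_union, Finset.mem_filter, Finset.mem_univ, true_and]
    have hv : (σ i : ℕ) < n := (σ i).isLt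
    have hc1 := hle i
    have hc2 := hcJ i
    by_cases h : (σ i : ℕ) + J < n
    · rw [Nat.mod_eq_of_lt h]
      omega
    · have hmod : ((σ i : ℕ) + J) % n = (σ i : ℕ) + J - n := by
        rw [Nat.mod_eq_sub_mod (le_of_not_gt h), Nat.mod_eq_of_lt (by omega)]
      rw [hmod]
      omega
  rw [hsplit, Finset.card_union_of_disjoint hdisj]
  congr 1
  rw [hB, card_filter_perm_comp σ (fun v : Fin n => n - J ≤ (v : ℕ)), card_filter_ge]
  omega

/-- Column-shifting for hit numbers: if every placement of `n` nonattacking rooks on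
`[n] × [n]` has at least `J` rooks on the Ferrers board `B` with column heights
`c i ≥ J`, then the hit numbers of `B` and of the board `R` obtained by shifting all
columns of `B` down by `J` satisfy `h_k(B) = h_{k-J}(R)` for `J ≤ k ≤ n`, and
`h_k(B) = 0` for `k < J`. -/
theorem hit_numbers_shift (n : ℕ) (c : Fin n → ℕ) (hmono : Monotone c)
    (hle : ∀ i, c i ≤ n) (J : ℕ)
    (hJ : ∀ σ : Equiv.Perm (Fin n),
      J ≤ (Finset.univ.filter (fun i : Fin n => (σ i : ℕ) < c i)).card)
    (hcJ : ∀ i, J ≤ c i) :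
    (∀ k : ℕ, J ≤ k → k ≤ n →
      (Finset.univ.filter (fun σ : Equiv.Perm (Fin n) =>
          (Finset.univ.filter (fun i : Fin n => (σ i : ℕ) < c i)).card = k)).card
        = (Finset.univ.filter (fun σ : Equiv.Perm (Fin n) =>
          (Finset.univ.filter (fun i : Fin n => (σ i : ℕ) < c i - J)).card = k - J)).card) ∧
    (∀ k : ℕ, k < J →
      (Finset.univ.filter (fun σ : Equiv.Perm (Fin n) =>
          (Finset.univ.filter (fun i : Fin n => (σ i : ℕ) < c i)).card = k)).card = 0) := by
  constructor
  · intro k hJk hkn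
    -- case J = 0 is trivial
    rcases Nat.eq_zero_or_pos J with hJ0 | hJ0
    · subst hJ0; simp
    have hn : 0 < n := lt_of_lt_of_le hJ0 (le_trans hJk hkn)
    haveI : NeZero n := ⟨hn.ne'⟩
    have hJn : J ≤ n := le_trans hJk hkn
    open Fin.NatCast in set ρ : Equiv.Perm (Fin n) := Equiv.addLeft ((J : ℕ) : Fin n) with hρ
    -- for any σ, the hit count of `ρ * σ` on B is the hit count of σ on R plus J
    have key : ∀ σ : Equiv.Perm (Fin n),
        (Finset.univ.filter (fun i : Fin n => (((ρ * σ) i : Fin n) : ℕ) < c i)).card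
          = (Finset.univ.filter (fun i : Fin n => (σ i : ℕ) < c i - J)).card + J := by
      intro σ
      have h1 : ∀ i : Fin n, (((ρ * σ) i : Fin n) : ℕ) = ((σ i : ℕ) + J) % n := by
        intro i
        simp only [hρ, Equiv.Perm.mul_apply, Equiv.coe_addLeft]
        simp only [Fin.val_add, Fin.val_natCast, Nat.mod_add_mod]
        rw [Nat.add_comm]
      have : (Finset.univ.filter (fun i : Fin n => (((ρ * σ) i : Fin n) : ℕ) < c i))
          = (Finset.univ.filter (fun i : Fin n => ((σ i : ℕ) + J) % n < c i)) := by
        apply Finset.filter_congr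
        intro i _
        rw [h1 i]
      rw [this]
      exact hit_shift J hJn c hle hcJ σ
    refine Finset.card_equiv (Equiv.mulLeft ρ⁻¹) (fun σ => ?_)
    simp only [Finset.mem_filter, Finset.mem_univ, true_and, Equiv.coe_mulLeft]
    constructor
    · intro h
      have := key (ρ⁻¹ * σ)
      rw [mul_inv_cancel_left] at this
      omega
    · intro h
      have := key (ρ⁻¹ * σ)
      rw [mul_inv_cancel_left] at this
      omega
  · intro k hk
    rw [Finset.card_eq_zero, Finset.filter_eq_empty_iff]
    intro σ _
    intro hcard
    have := hJ σ
    omega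
end
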